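/- arXiv:1809.08845 — 2 statements merged into one kernel-verified Lean document; each statement's English description precedes it below -/
import Mathlib

section
/- For every vertex μ of Γ, the value semigroup SV_μ is generated, as a submonoid of ℕ, by the Zariski exponents of μ: SV_μ = ⟨V_{μτ} : τ an end of Γ, i.e. v_Γ(τ) ≤ 1⟩. -/
open Matrix BigOperators

open scoped Classical

noncomputable section

/-- Proximity data of a dual graph on vertex set `Fin N`, built from a single
root vertex by a finite sequence of elementary modifications. Vertices are
ordered by creation; each new vertex is proximate to at most two existing
(earlier) vertices, which must be adjacent to each other at that time if
there are two of them. -/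
structure DualGraph where
  N : ℕ
  Npos : 0 < N
  prox : Fin N → Fin N → Prop
  prox_lt : ∀ {μ ν}, prox μ ν → ν < μ
  prox_card : ∀ μ, {ν | prox μ ν}.ncard ≤ 2
  prox_nonempty : ∀ μ : Fin N, 0 < (μ : ℕ) → ∃ ν, prox μ ν
  prox_pair : ∀ {μ a b}, prox μ a → prox μ b → a ≠ b →
      (prox a b ∨ prox b a) ∧ ∀ ρ, ρ < μ → ¬(prox ρ a ∧ prox ρ b)

namespace DualGraph

variable (G : DualGraph)

/-- The proximity matrix `P`. -/
def P : Matrix (Fin G.N) (Fin G.N) ℚ :=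
  fun μ ν => if μ = ν then 1 else if G.prox μ ν then -1 else 0

/-- `Q = P⁻¹`. -/
def Q : Matrix (Fin G.N) (Fin G.N) ℚ := (G.P)⁻¹

/-- The valuation matrix `V = (PᵀP)⁻¹`. -/
def V : Matrix (Fin G.N) (Fin G.N) ℚ := (G.Pᵀ * G.P)⁻¹

/-- Adjacency in the dual graph: `μ ∼ ν` iff `(PᵀP)_{μν} = -1`. -/
def adj (μ ν : Fin G.N) : Prop := μ ≠ ν ∧ (G.Pᵀ * G.P) μ ν = -1

lemma adj_symm {μ ν : Fin G.N} (h : G.adj μ ν) : G.adj ν μ := by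
  obtain ⟨hne, h2⟩ := h
  refine ⟨hne.symm, ?_⟩
  have ht : (G.Pᵀ * G.P)ᵀ = G.Pᵀ * G.P := by
    rw [Matrix.transpose_mul, Matrix.transpose_transpose]
  calc (G.Pᵀ * G.P) ν μ = (G.Pᵀ * G.P)ᵀ μ ν := rfl
    _ = (G.Pᵀ * G.P) μ ν := by rw [ht]
    _ = -1 := h2

/-- The dual graph as a simple graph. -/
def graph : SimpleGraph (Fin G.N) where
  Adj := G.adj
  symm := ⟨fun _ _ h => G.adj_symm h⟩
  loopless := ⟨fun μ h => h.1 rfl⟩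

/-- The graph distance `d(μ,ν)`. -/
def dist (μ ν : Fin G.N) : ℕ := G.graph.dist μ ν

/-- The set of vertices on the unique path `[μ,γ]` from `μ` to `γ`. -/
def pathSet (μ γ : Fin G.N) : Finset (Fin G.N) :=
  Finset.univ.filter (fun ν => G.dist μ ν + G.dist ν γ = G.dist μ γ)

/-- The branch `Γ^μ_ν` emanating from `μ` towards `ν`: the maximal connected
subgraph of `Γ` containing `ν` but not `μ` (with `Γ^μ_μ = ∅`). -/
def branch (μ ν : Fin G.N) : Finset (Fin G.N) :=
  Finset.univ.filter (fun η => ν ≠ μ ∧ η ≠ μ ∧ μ ∉ G.pathSet ν η)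

/-- The set of vertices adjacent to `μ`. -/
def nbrs (μ : Fin G.N) : Finset (Fin G.N) := Finset.univ.filter (fun ν => G.adj μ ν)

/-- The valence `v_Γ(μ)`: the number of vertices adjacent to `μ`. -/
def valence (μ : Fin G.N) : ℕ := (G.nbrs μ).card

/-- The weight `w_Γ(μ) = (PᵀP)_{μμ}`. -/
def w (μ : Fin G.N) : ℚ := (G.Pᵀ * G.P) μ μ

/-- The canonical vector `k`, `k_ν = Σ_μ q_{νμ}`. -/
def kvec : Fin G.N → ℚ := fun ν => ∑ μ, G.Q ν μ

/-- A divisor with valuation vector `f` is antinef iff its factorization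
vector `f̂ = f PᵀP` is nonnegative. -/
def Antinef (f : Fin G.N → ℚ) : Prop := ∀ ν, 0 ≤ (f ᵥ* (G.Pᵀ * G.P)) ν

/-- `λ(fE, gE; ν) = (f_ν + k_ν + 1)/g_ν` for divisors with valuation
vectors `f`, `g`. -/
def lamDiv (f g : Fin G.N → ℚ) (ν : Fin G.N) : ℚ := (f ν + G.kvec ν + 1) / g ν

/-- `ρ_{[μ,γ]}(ν) = V_{γν}/V_{μν}`. -/
def rho (μ γ ν : Fin G.N) : ℚ := G.V γ ν / G.V μ ν

/-- `r̂_{[μ,γ]} = 𝟙_γ − ρ_{[μ,γ]}(μ)·𝟙_μ`. -/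
def rhat (μ γ : Fin G.N) : Fin G.N → ℚ :=
  fun j => (if j = γ then 1 else 0) - G.rho μ γ μ * (if j = μ then 1 else 0)

/-- `φ_η^{[μ,γ]}(ν) = (r̂_{[μ,γ]}V)_ν / V_{ην}`. -/
def phi (η μ γ ν : Fin G.N) : ℚ := (G.rhat μ γ ᵥ* G.V) ν / G.V η ν

/-- The transform `f̂_{⟨ĝ⟩[ĥ]}` relative to the vertex `μ`. -/
def transform (μ : Fin G.N) (fh gh hh : Fin G.N → ℚ) : Fin G.N → ℚ :=
  fh - (∑ i ∈ G.nbrs μ, ∑ j ∈ G.branch μ i, gh j • G.rhat i j)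
     + ∑ i ∈ G.nbrs μ, hh i • G.rhat μ i

/-- The transform `f̂^𝒩 = f̂ − Σ_i f̂_i·r̂_{[μ,i]}` relative to the vertex `μ`. -/
def nmap (μ : Fin G.N) (fh : Fin G.N → ℚ) : Fin G.N → ℚ :=
  fh - ∑ i, fh i • G.rhat μ i

/-- A vertex is free if it is proximate to at most one vertex. -/
def Free (μ : Fin G.N) : Prop := {ν | G.prox μ ν}.ncard ≤ 1

/-- `μ` is infinitely near to `ν` (written `ν ⊂ μ`): the reflexive-transitive
closure of proximity. -/
def InfNear (μ ν : Fin G.N) : Prop := Relation.ReflTransGen G.prox μ ν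

/-- The root vertex. -/
def root : Fin G.N := ⟨0, G.Npos⟩

/-- The branch `Γ^μ_ν` is anterior to `μ` if `μ` is infinitely near to some of
its vertices; otherwise it is posterior. -/
def Anterior (μ ν : Fin G.N) : Prop := ∃ η ∈ G.branch μ ν, G.InfNear μ η

/-- The pair `(γ,τ)` associated to `μ`. -/
def PairAssociated (γ τ μ : Fin G.N) : Prop :=
  G.InfNear τ γ ∧ G.InfNear μ τ ∧ G.Free τ ∧
  (∀ ν, G.Free ν → G.InfNear μ ν → G.InfNear τ ν) ∧
  ((¬ G.Free γ ∧ ∀ ν, ¬ G.Free ν → G.InfNear τ ν → G.InfNear γ ν) ∨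
   ((∀ ν, G.InfNear τ ν → G.Free ν) ∧ γ = G.root))

/-- The entries of `V` as natural numbers (they are positive integers). -/
def Vnat (μ ν : Fin G.N) : ℕ := (G.V μ ν).num.toNat

/-- The submonoid `SV^μ_ν` of `ℕ` generated by `{V_{μi} : i ∈ Γ^μ_ν ∪ {μ}}`. -/
def SVb (μ ν : Fin G.N) : AddSubmonoid ℕ :=
  AddSubmonoid.closure ↑((insert μ (G.branch μ ν)).image (G.Vnat μ))

/-- `s^μ_ν = gcd{V_{μi} : i ∈ Γ^μ_ν ∪ {μ}}`. -/
def sgcd (μ ν : Fin G.N) : ℕ := (insert μ (G.branch μ ν)).gcd (G.Vnat μ)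

/-- The submonoid `S^μ` of `ℕ` generated by the `s^μ_ν`, `ν ∈ Γ`. -/
def Ssg (μ : Fin G.N) : AddSubmonoid ℕ :=
  AddSubmonoid.closure (Set.range (fun ν => G.sgcd μ ν))

/-- The valuation vector `d = d̂V` of the ideal with factorization vector `d̂`. -/
def dval (dh : Fin G.N → ℕ) : Fin G.N → ℚ := (fun i => (dh i : ℚ)) ᵥ* G.V

/-- `λ(a,ν) = (a + k_ν + 1)/d_ν`. -/
def lamA (dh : Fin G.N → ℕ) (a : ℚ) (ν : Fin G.N) : ℚ :=
  (a + G.kvec ν + 1) / G.dval dh ν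

/-- The set of jumping numbers of the ideal with factorization vector `d̂`
supported at the vertex `μ`. -/
def Hset (dh : Fin G.N → ℕ) (μ : Fin G.N) : Set ℚ :=
  { ξ | ∃ f : Fin G.N → ℤ, G.Antinef (fun i => (f i : ℚ)) ∧
      (∀ ν, G.lamA dh (f μ : ℚ) μ ≤ G.lamA dh (f ν : ℚ) ν) ∧
      ξ = G.lamA dh (f μ : ℚ) μ }

end DualGraph
end

/-!
Write `V = Q Qᵀ`, where `Q = P⁻¹` has natural entries, and build `Γ` one vertex at a time. A
vertex `v` proximate to `τ` alone has the row of `τ` on older vertices and is a new end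
replacing `τ`; a vertex proximate to two adjacent vertices `p, q` has the sum of their rows.
The second case forces a stronger induction: besides the semigroup of each row, carry for
every edge `x — y` and coprime `c, d ≥ 1` the semigroup generated by the values
`c V_{xσ} + d V_{yσ}` at the ends `σ` (the row of the vertex the Euclidean algorithm on
`(c, d)` would create on that edge). Both kinds of semigroups contain the values at all
vertices and every integer past an explicit conductor bound. Inserting `v` on the edge `p — q`
turns the edge `p — v` with weights `(c, d)` into the edge `p — q` with weights `(c + d, d)`;
a free vertex is handled by the conductor bound of `τ` and the Chicken McNugget theorem.
-/

open Finset

theorem AddSubmonoid.closure_image_le_closure_image {α M : Type*} [AddMonoid M] {f g : α → M}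
    {s t : Set α} (h : ∀ a ∈ s, ∃ b ∈ t, g b = f a) :
    AddSubmonoid.closure (f '' s) ≤ AddSubmonoid.closure (g '' t) :=
  AddSubmonoid.closure_le.2 fun _ ⟨a, ha, hfa⟩ =>
    let ⟨b, hb, hgb⟩ := h a ha
    AddSubmonoid.subset_closure ⟨b, hb, hgb.trans hfa⟩

theorem Nat.mul_mem_of_mem_closure {A : Set ℕ} {S : AddSubmonoid ℕ} {k s : ℕ}
    (h : ∀ a ∈ A, k * a ∈ S) (hs : s ∈ AddSubmonoid.closure A) : k * s ∈ S :=
  (AddSubmonoid.closure_le (S := S.comap (AddMonoidHom.mulLeft k))).2 h hs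

theorem Nat.mem_of_mul_le_of_coprime {S : AddSubmonoid ℕ} {a b w m : ℕ} (hab : a.Coprime b)
    (hw : a * w < b) (hb : b ∈ S) (ha : ∀ s, w ≤ s → a * s ∈ S) (hm : a * b ≤ m) :
    m ∈ S := by
  have haw : a * w ≤ m := by
    rcases Nat.eq_zero_or_pos a with rfl | ha0
    · simp
    · nlinarith
  have hfrob : b.pred * a.pred ≤ m - a * w := by
    rcases a with _ | a
    · simp
    rcases b with _ | b
    · omega
    have := Nat.sub_add_cancel haw
    simp only [Nat.pred_succ]
    nlinarith
  obtain ⟨t, s, hts⟩ := Nat.exists_add_mul_eq_of_gcd_dvd_of_mul_pred_le b a (m - a * w)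
    (by simp [hab.symm.gcd_eq_one]) hfrob
  rw [show m = t * b + a * (s + w) by rw [mul_add, ← Nat.sub_add_cancel haw, ← hts]; ring]
  exact S.add_mem (by simpa using S.nsmul_mem hb t) (ha _ (Nat.le_add_left w s))

namespace DualGraph

variable {G : DualGraph}

noncomputable def proxSet (G : DualGraph) (v : Fin G.N) : Finset (Fin G.N) :=
  univ.filter (G.prox v)

theorem mem_proxSet {v j : Fin G.N} : j ∈ G.proxSet v ↔ G.prox v j := by
  simp [proxSet]

theorem lt_of_mem_proxSet {v j : Fin G.N} (h : j ∈ G.proxSet v) : j < v :=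
  G.prox_lt (mem_proxSet.1 h)

theorem proxSet_eq_of_prox {v x : Fin G.N} (hx : G.prox v x) :
    G.proxSet v = {x} ∨ ∃ q, q ≠ x ∧ G.proxSet v = {x, q} := by
  have hmem : x ∈ G.proxSet v := mem_proxSet.2 hx
  have hcard : (G.proxSet v).card ≤ 2 := by
    simpa [proxSet, ← Set.ncard_coe_finset] using G.prox_card v
  rcases ((G.proxSet v).erase x).eq_empty_or_nonempty with h | ⟨q, hq⟩
  · exact .inl (by rw [← insert_erase hmem, h]; rfl)
  · have hle : ((G.proxSet v).erase x).card ≤ 1 := by rw [card_erase_of_mem hmem]; omega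
    have hq' : (G.proxSet v).erase x = {q} :=
      eq_singleton_iff_unique_mem.2 ⟨hq, fun r hr => card_le_one.1 hle r hr q hq⟩
    exact .inr ⟨q, (mem_erase.1 hq).1, by rw [← insert_erase hmem, hq']⟩

/-- The entries of `Q = P⁻¹`. -/
noncomputable def mult (G : DualGraph) (v k : Fin G.N) : ℕ :=
  (if v = k then 1 else 0) + ∑ j ∈ (G.proxSet v).attach, G.mult j k
termination_by (v : ℕ)
decreasing_by exact lt_of_mem_proxSet j.2

theorem mult_eq (v k : Fin G.N) :
    G.mult v k = (if v = k then 1 else 0) + ∑ j ∈ G.proxSet v, G.mult j k := by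
  rw [mult, sum_attach (G.proxSet v) (G.mult · k)]

theorem mult_eq_zero_of_lt {v k : Fin G.N} (h : v < k) : G.mult v k = 0 := by
  induction v using WellFoundedLT.induction with
  | _ v ih =>
    rw [mult_eq, if_neg h.ne, zero_add]
    exact sum_eq_zero fun j hj => ih j (lt_of_mem_proxSet hj) ((lt_of_mem_proxSet hj).trans h)

theorem mult_self (v : Fin G.N) : G.mult v v = 1 := by
  rw [mult_eq, if_pos rfl, sum_eq_zero fun j hj => mult_eq_zero_of_lt (lt_of_mem_proxSet hj),
    add_zero]

/-- The entries of `V = Q Qᵀ`. -/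
noncomputable def val (G : DualGraph) (μ ν : Fin G.N) : ℕ := ∑ k, G.mult μ k * G.mult ν k

theorem val_comm (μ ν : Fin G.N) : G.val μ ν = G.val ν μ := by
  simp only [val, mul_comm]

theorem val_eq_mult_add_sum (v ν : Fin G.N) :
    G.val v ν = G.mult ν v + ∑ j ∈ G.proxSet v, G.val j ν := by
  simp only [val, mult_eq v, add_mul, sum_add_distrib, ite_mul, one_mul, zero_mul, sum_ite_eq,
    mem_univ, if_true, sum_mul]
  rw [sum_comm]

theorem val_eq_sum_of_lt {v ν : Fin G.N} (h : ν < v) :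
    G.val v ν = ∑ j ∈ G.proxSet v, G.val j ν := by
  rw [val_eq_mult_add_sum, mult_eq_zero_of_lt h, zero_add]

theorem val_self_eq (v : Fin G.N) :
    G.val v v = 1 + ∑ i ∈ G.proxSet v, ∑ j ∈ G.proxSet v, G.val i j := by
  rw [val_eq_mult_add_sum, mult_self]
  congr 1
  refine sum_congr rfl fun i hi => ?_
  rw [val_comm, val_eq_sum_of_lt (lt_of_mem_proxSet hi)]
  exact sum_congr rfl fun j _ => val_comm j i

section Valuations

variable {v p q τ ν : Fin G.N}

theorem val_eq_of_proxSet_eq_singleton (hU : G.proxSet v = {τ}) (hν : ν < v) :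
    G.val v ν = G.val τ ν := by
  rw [val_eq_sum_of_lt hν, hU, sum_singleton]

theorem val_self_of_proxSet_eq_singleton (hU : G.proxSet v = {τ}) :
    G.val v v = 1 + G.val τ τ := by
  rw [val_self_eq, hU, sum_singleton, sum_singleton]

theorem val_eq_of_proxSet_eq_pair (hpq : p ≠ q) (hU : G.proxSet v = {p, q}) (hν : ν < v) :
    G.val v ν = G.val p ν + G.val q ν := by
  rw [val_eq_sum_of_lt hν, hU, sum_pair hpq]

theorem val_self_of_proxSet_eq_pair (hpq : p ≠ q) (hU : G.proxSet v = {p, q}) :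
    G.val v v = 1 + G.val p p + 2 * G.val p q + G.val q q := by
  rw [val_self_eq, hU, sum_pair hpq, sum_pair hpq, sum_pair hpq, val_comm q p]
  ring

end Valuations

/-- Adjacency in the dual graph of the first `n` vertices: proximity creates an edge, and
the first later vertex proximate to both of its ends removes it. -/
def adjAt (G : DualGraph) (n : ℕ) (x y : Fin G.N) : Prop :=
  x ≠ y ∧ (x : ℕ) < n ∧ (y : ℕ) < n ∧ (G.prox x y ∨ G.prox y x) ∧
    ∀ k : Fin G.N, (k : ℕ) < n → ¬(G.prox k x ∧ G.prox k y)

theorem adjAt.symm {n : ℕ} {x y : Fin G.N} (h : G.adjAt n x y) : G.adjAt n y x :=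
  ⟨h.1.symm, h.2.2.1, h.2.1, h.2.2.2.1.symm, fun k hk hc => h.2.2.2.2 k hk hc.symm⟩

theorem adjAt_of_prox {n : ℕ} {v a b : Fin G.N} (hv : (v : ℕ) = n) (ha : G.prox v a)
    (hb : G.prox v b) (hab : a ≠ b) : G.adjAt n a b := by
  obtain ⟨hprox, hfirst⟩ := G.prox_pair ha hb hab
  have := G.prox_lt ha; have := G.prox_lt hb
  exact ⟨hab, by omega, by omega, hprox, fun k hk => hfirst k (by omega)⟩

theorem adjAt_succ_iff {n : ℕ} {v x y : Fin G.N} (hv : (v : ℕ) = n) :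
    G.adjAt (n + 1) x y ↔ (G.adjAt n x y ∧ ¬(G.prox v x ∧ G.prox v y)) ∨
      (y = v ∧ G.prox v x) ∨ (x = v ∧ G.prox v y) := by
  have new : ∀ {x}, G.prox v x → G.adjAt (n + 1) x v := fun {x} hx => by
    have := G.prox_lt hx
    refine ⟨this.ne, by omega, by omega, Or.inr hx, fun k _ hk => ?_⟩
    have := G.prox_lt hk.2
    omega
  constructor
  · rintro ⟨hne, hx, hy, hxy, hfirst⟩
    rcases Nat.lt_or_ge x n with hx' | hx' <;> rcases Nat.lt_or_ge y n with hy' | hy'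
    · exact .inl ⟨⟨hne, hx', hy', hxy, fun k hk => hfirst k (by omega)⟩,
        hfirst v (by omega)⟩
    · have hyv : y = v := Fin.ext (by omega)
      subst hyv
      refine .inr (.inl ⟨rfl, hxy.resolve_left fun h => ?_⟩)
      have := G.prox_lt h
      omega
    · have hxv : x = v := Fin.ext (by omega)
      subst hxv
      refine .inr (.inr ⟨rfl, hxy.resolve_right fun h => ?_⟩)
      have := G.prox_lt h
      omega
    · exact absurd (Fin.ext (by omega)) hne
  · rintro (⟨⟨hne, hx, hy, hxy, hfirst⟩, hv'⟩ | ⟨rfl, hx⟩ | ⟨rfl, hy⟩)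
    · refine ⟨hne, by omega, by omega, hxy, fun k hk => ?_⟩
      rcases Nat.lt_or_ge k n with hk' | hk'
      · exact hfirst k hk'
      · rwa [show k = v from Fin.ext (by omega)]
    · exact new hx
    · exact (new hy).symm

def IsEndAt (G : DualGraph) (n : ℕ) (σ : Fin G.N) : Prop :=
  (σ : ℕ) < n ∧ ∀ y z, G.adjAt n σ y → G.adjAt n σ z → y = z

theorem isEndAt_of_le_two {n : ℕ} {σ : Fin G.N} (hn : n ≤ 2) (hσ : (σ : ℕ) < n) :
    G.IsEndAt n σ := by
  refine ⟨hσ, fun y z hy hz => Fin.ext ?_⟩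
  have := Fin.val_ne_of_ne hy.1; have := Fin.val_ne_of_ne hz.1
  have := hy.2.2.1; have := hz.2.2.1
  omega

theorem isEndAt_succ {n : ℕ} {v σ : Fin G.N} (hv : (v : ℕ) = n) (hσ : G.IsEndAt n σ)
    (h : G.prox v σ → ∃ q ≠ σ, G.prox v q) : G.IsEndAt (n + 1) σ := by
  have hσv : σ ≠ v := fun h => by have := hσ.1; rw [h] at this; omega
  refine ⟨by have := hσ.1; omega, ?_⟩
  by_cases hp : G.prox v σ
  · obtain ⟨q, hqσ, hq⟩ := h hp
    have hσq : G.adjAt n σ q := adjAt_of_prox hv hp hq hqσ.symm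
    have only_v : ∀ y, G.adjAt (n + 1) σ y → y = v := fun y hy => by
      rcases (adjAt_succ_iff hv).1 hy with ⟨hσy, hnot⟩ | ⟨rfl, -⟩ | ⟨rfl, -⟩
      · exact absurd ⟨hp, hσ.2 y q hσy hσq ▸ hq⟩ hnot
      · rfl
      · exact absurd rfl hσv
    exact fun y z hy hz => (only_v y hy).trans (only_v z hz).symm
  · have old : ∀ y, G.adjAt (n + 1) σ y → G.adjAt n σ y := fun y hy => by
      rcases (adjAt_succ_iff hv).1 hy with ⟨hσy, -⟩ | ⟨-, h⟩ | ⟨rfl, -⟩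
      · exact hσy
      · exact absurd h hp
      · exact absurd rfl hσv
    exact fun y z hy hz => hσ.2 y z (old y hy) (old z hz)

theorem isEndAt_succ_self {n : ℕ} {v τ : Fin G.N} (hv : (v : ℕ) = n)
    (hU : G.proxSet v = {τ}) : G.IsEndAt (n + 1) v := by
  have only_τ : ∀ y, G.adjAt (n + 1) v y → y = τ := fun y hy => by
    rcases (adjAt_succ_iff hv).1 hy with ⟨hvy, -⟩ | ⟨rfl, -⟩ | ⟨-, h⟩
    · exact absurd hvy.2.1 (by omega)
    · exact absurd rfl hy.1
    · simpa [hU] using mem_proxSet.2 h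
  exact ⟨by omega, fun y z hy hz => (only_τ y hy).trans (only_τ z hz).symm⟩

theorem exists_isEndAt_succ {n : ℕ} {v σ : Fin G.N} (hv : (v : ℕ) = n) (hσ : G.IsEndAt n σ) :
    ∃ σ', G.IsEndAt (n + 1) σ' ∧ (σ' = σ ∨ σ' = v) ∧
      ∀ μ : Fin G.N, (μ : ℕ) < n → G.val μ σ' = G.val μ σ := by
  by_cases h : G.prox v σ → ∃ q ≠ σ, G.prox v q
  · exact ⟨σ, isEndAt_succ hv hσ h, .inl rfl, fun _ _ => rfl⟩
  · push Not at h
    have hU : G.proxSet v = {σ} := (proxSet_eq_of_prox h.1).resolve_right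
      fun ⟨q, hqσ, hU⟩ => h.2 q hqσ (mem_proxSet.1 (by simp [hU]))
    refine ⟨v, isEndAt_succ_self hv hU, .inr rfl, fun μ hμ => ?_⟩
    rw [val_comm, val_eq_of_proxSet_eq_singleton hU (by rw [Fin.lt_def]; omega), val_comm]

/-- Row semigroups leave out `μ` itself, so that a free vertex proximate to `μ` alone
inherits the semigroup of `μ`. -/
noncomputable def rowMonoid (G : DualGraph) (n : ℕ) (μ : Fin G.N) : AddSubmonoid ℕ :=
  AddSubmonoid.closure (G.val μ '' {σ | G.IsEndAt n σ ∧ σ ≠ μ})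

noncomputable def edgeVal (G : DualGraph) (x y : Fin G.N) (c d : ℕ) (σ : Fin G.N) : ℕ :=
  c * G.val x σ + d * G.val y σ

noncomputable def edgeMonoid (G : DualGraph) (n : ℕ) (x y : Fin G.N) (c d : ℕ) :
    AddSubmonoid ℕ :=
  AddSubmonoid.closure (G.edgeVal x y c d '' {σ | G.IsEndAt n σ})

theorem edgeVal_swap (x y : Fin G.N) (c d : ℕ) : G.edgeVal y x d c = G.edgeVal x y c d :=
  funext fun _ => add_comm _ _

theorem edgeMonoid_swap (n : ℕ) (x y : Fin G.N) (c d : ℕ) :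
    G.edgeMonoid n y x d c = G.edgeMonoid n x y c d := by
  rw [edgeMonoid, edgeVal_swap, edgeMonoid]

theorem edgeVal_eq_sum_of_lt {v x y : Fin G.N} (c d : ℕ) (hx : x < v) (hy : y < v) :
    G.edgeVal x y c d v = ∑ j ∈ G.proxSet v, G.edgeVal x y c d j := by
  simp only [edgeVal, val_comm _ v, val_eq_sum_of_lt hx, val_eq_sum_of_lt hy, mul_sum,
    ← sum_add_distrib, val_comm x, val_comm y]

structure RowInv (G : DualGraph) (n : ℕ) (μ : Fin G.N) : Prop where
  mem : ∀ ν : Fin G.N, (ν : ℕ) < n → G.val μ ν ∈ G.rowMonoid n μ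
  conductor : ∀ m, G.val μ μ ≤ m → m ∈ G.rowMonoid n μ

/-- The conductor bound is `V_zz` for the vertex `z` that the Euclidean algorithm on `(c, d)`
creates on the edge: `c² V_xx + 2cd V_xy + d² V_yy`, plus `cd` for the squared multiplicities
along that chain. -/
structure EdgeInv (G : DualGraph) (n : ℕ) (x y : Fin G.N) (c d : ℕ) : Prop where
  mem : ∀ ν : Fin G.N, (ν : ℕ) < n → G.edgeVal x y c d ν ∈ G.edgeMonoid n x y c d
  add_left : G.edgeVal x y c d x + d ∈ G.edgeMonoid n x y c d
  add_right : G.edgeVal x y c d y + c ∈ G.edgeMonoid n x y c d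
  conductor : ∀ m, c * G.edgeVal x y c d x + d * G.edgeVal x y c d y + c * d ≤ m →
    m ∈ G.edgeMonoid n x y c d

theorem EdgeInv.symm {n : ℕ} {x y : Fin G.N} {c d : ℕ} (h : G.EdgeInv n x y c d) :
    G.EdgeInv n y x d c := by
  refine ⟨?_, ?_, ?_, ?_⟩ <;> simp only [edgeVal_swap, edgeMonoid_swap]
  exacts [h.mem, h.add_right, h.add_left, fun m hm => h.conductor m (by linarith)]

structure Invariant (G : DualGraph) (n : ℕ) : Prop where
  row : ∀ μ : Fin G.N, (μ : ℕ) < n → G.RowInv n μ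
  edge : ∀ x y c d, G.adjAt n x y → c.Coprime d → 0 < c → 0 < d → G.EdgeInv n x y c d

section Step

variable {n : ℕ} {v p q τ : Fin G.N}

theorem rowMonoid_le_succ {μ : Fin G.N} (hv : (v : ℕ) = n) (hμ : (μ : ℕ) < n) :
    G.rowMonoid n μ ≤ G.rowMonoid (n + 1) μ := by
  refine AddSubmonoid.closure_image_le_closure_image fun σ ⟨hσ, hσμ⟩ => ?_
  obtain ⟨σ', hσ', hσ'σ, hval⟩ := exists_isEndAt_succ hv hσ
  refine ⟨σ', ⟨hσ', ?_⟩, hval μ hμ⟩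
  rintro rfl
  rcases hσ'σ with rfl | rfl
  exacts [hσμ rfl, by omega]

theorem edgeMonoid_le_succ {x y : Fin G.N} (c d : ℕ) (hv : (v : ℕ) = n) (hx : (x : ℕ) < n)
    (hy : (y : ℕ) < n) : G.edgeMonoid n x y c d ≤ G.edgeMonoid (n + 1) x y c d := by
  refine AddSubmonoid.closure_image_le_closure_image fun σ hσ => ?_
  obtain ⟨σ', hσ', -, hval⟩ := exists_isEndAt_succ hv hσ
  exact ⟨σ', hσ', by simp only [edgeVal, hval x hx, hval y hy]⟩

theorem RowInv.succ_of_lt {μ : Fin G.N} (hv : (v : ℕ) = n) (hμ : (μ : ℕ) < n)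
    (h : G.RowInv n μ) : G.RowInv (n + 1) μ where
  mem ν hν := by
    rcases Nat.lt_or_ge ν n with hν' | hν'
    · exact rowMonoid_le_succ hv hμ (h.mem ν hν')
    · rw [show ν = v from Fin.ext (by omega), val_comm,
        val_eq_sum_of_lt (by rw [Fin.lt_def]; omega)]
      refine sum_mem fun j hj => ?_
      rw [val_comm]
      exact rowMonoid_le_succ hv hμ (h.mem j (hv ▸ lt_of_mem_proxSet hj))
  conductor m hm := rowMonoid_le_succ hv hμ (h.conductor m hm)

theorem EdgeInv.succ_of_lt {x y : Fin G.N} {c d : ℕ} (hv : (v : ℕ) = n) (hx : (x : ℕ) < n)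
    (hy : (y : ℕ) < n) (h : G.EdgeInv n x y c d) : G.EdgeInv (n + 1) x y c d where
  mem ν hν := by
    rcases Nat.lt_or_ge ν n with hν' | hν'
    · exact edgeMonoid_le_succ c d hv hx hy (h.mem ν hν')
    · rw [show ν = v from Fin.ext (by omega),
        edgeVal_eq_sum_of_lt c d (by rw [Fin.lt_def]; omega) (by rw [Fin.lt_def]; omega)]
      exact sum_mem fun j hj =>
        edgeMonoid_le_succ c d hv hx hy (h.mem j (hv ▸ lt_of_mem_proxSet hj))
  add_left := edgeMonoid_le_succ c d hv hx hy h.add_left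
  add_right := edgeMonoid_le_succ c d hv hx hy h.add_right
  conductor m hm := edgeMonoid_le_succ c d hv hx hy (h.conductor m hm)


theorem isEndAt_succ_of_singleton {σ : Fin G.N} (hv : (v : ℕ) = n)
    (hU : G.proxSet v = {τ}) (hσ : G.IsEndAt n σ) (hστ : σ ≠ τ) : G.IsEndAt (n + 1) σ :=
  isEndAt_succ hv hσ fun h => absurd (by simpa [hU] using mem_proxSet.2 h) hστ

theorem isEndAt_succ_of_pair {σ : Fin G.N} (hv : (v : ℕ) = n) (hpq : p ≠ q)
    (hU : G.proxSet v = {p, q}) (hσ : G.IsEndAt n σ) : G.IsEndAt (n + 1) σ := by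
  refine isEndAt_succ hv hσ fun h => ?_
  rcases (by simpa [hU] using mem_proxSet.2 h : σ = p ∨ σ = q) with rfl | rfl
  exacts [⟨q, hpq.symm, mem_proxSet.1 (by simp [hU])⟩,
    ⟨p, hpq, mem_proxSet.1 (by simp [hU])⟩]

theorem rowInv_succ_of_singleton (hv : (v : ℕ) = n) (hU : G.proxSet v = {τ})
    (h : G.RowInv n τ) : G.RowInv (n + 1) v := by
  have hle : G.rowMonoid n τ ≤ G.rowMonoid (n + 1) v :=
    AddSubmonoid.closure_image_le_closure_image fun σ ⟨hσ, hστ⟩ =>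
      have hσv : σ < v := Fin.lt_def.2 (hv ▸ hσ.1)
      ⟨σ, ⟨isEndAt_succ_of_singleton hv hU hσ hστ, hσv.ne⟩,
        val_eq_of_proxSet_eq_singleton hU hσv⟩
  have hvv := val_self_of_proxSet_eq_singleton hU
  refine ⟨fun ν hν => ?_, fun m hm => hle (h.conductor m (by omega))⟩
  rcases Nat.lt_or_ge ν n with hν' | hν'
  · rw [val_eq_of_proxSet_eq_singleton hU (Fin.lt_def.2 (by omega))]
    exact hle (h.mem ν hν')
  · rw [show ν = v from Fin.ext (by omega)]
    exact hle (h.conductor _ (by omega))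

theorem rowInv_succ_of_pair (hv : (v : ℕ) = n) (hpq : p ≠ q) (hU : G.proxSet v = {p, q})
    (h : G.EdgeInv n p q 1 1) : G.RowInv (n + 1) v := by
  have hle : G.edgeMonoid n p q 1 1 ≤ G.rowMonoid (n + 1) v :=
    AddSubmonoid.closure_image_le_closure_image fun σ hσ =>
      ⟨σ, ⟨isEndAt_succ_of_pair hv hpq hU hσ, (Fin.lt_def.2 (hv ▸ hσ.1)).ne⟩, by
        rw [val_eq_of_proxSet_eq_pair hpq hU (Fin.lt_def.2 (hv ▸ hσ.1)), edgeVal]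
        ring⟩
  have hvv : G.val v v = 1 * G.edgeVal p q 1 1 p + 1 * G.edgeVal p q 1 1 q + 1 * 1 := by
    rw [val_self_of_proxSet_eq_pair hpq hU, edgeVal, edgeVal, val_comm q p]
    ring
  refine ⟨fun ν hν => ?_, fun m hm => hle (h.conductor m (hvv ▸ hm))⟩
  rcases Nat.lt_or_ge ν n with hν' | hν'
  · rw [val_eq_of_proxSet_eq_pair hpq hU (Fin.lt_def.2 (by omega))]
    simpa [edgeVal] using hle (h.mem ν hν')
  · rw [show ν = v from Fin.ext (by omega)]
    exact hle (h.conductor _ hvv.ge)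

theorem edgeInv_succ_of_singleton {c d : ℕ} (hv : (v : ℕ) = n) (hU : G.proxSet v = {τ})
    (hcd : c.Coprime d) (hd : 0 < d)
    (hrow : ∀ ν : Fin G.N, (ν : ℕ) < n →
      (c + d) * G.val τ ν ∈ G.edgeMonoid (n + 1) τ v c d)
    (hcond : ∀ s, G.val τ τ ≤ s → (c + d) * s ∈ G.edgeMonoid (n + 1) τ v c d) :
    G.EdgeInv (n + 1) τ v c d := by
  have hτ : τ < v := lt_of_mem_proxSet (by simp [hU])
  have hE : ∀ ν, ν < v → G.edgeVal τ v c d ν = (c + d) * G.val τ ν := fun ν hν => by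
    rw [edgeVal, val_eq_of_proxSet_eq_singleton hU hν]
    ring
  have hEv : G.edgeVal τ v c d v = (c + d) * G.val τ τ + d := by
    rw [edgeVal, val_comm τ v, val_eq_of_proxSet_eq_singleton hU hτ,
      val_self_of_proxSet_eq_singleton hU]
    ring
  have hgen : G.edgeVal τ v c d v ∈ G.edgeMonoid (n + 1) τ v c d :=
    AddSubmonoid.subset_closure ⟨v, isEndAt_succ_self hv hU, rfl⟩
  refine ⟨fun ν hν => ?_, ?_, ?_, fun m hm => ?_⟩
  · rcases Nat.lt_or_ge ν n with hν' | hν'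
    · rw [hE ν (Fin.lt_def.2 (by omega))]
      exact hrow ν hν'
    · rwa [show ν = v from Fin.ext (by omega)]
  · rwa [hE τ hτ, ← hEv]
  · rw [hEv, show (c + d) * G.val τ τ + d + c = (c + d) * (G.val τ τ + 1) by ring]
    exact hcond _ (by omega)
  · rw [hE τ hτ, hEv] at hm
    refine Nat.mem_of_mul_le_of_coprime ?_ ?_ hgen hcond ?_ <;> rw [hEv]
    · exact (Nat.coprime_mul_left_add_right _ _ _).2 (Nat.coprime_add_self_left.2 hcd)
    · omega
    · linarith

theorem edgeInv_succ_of_pair {c d : ℕ} (hv : (v : ℕ) = n) (hpq : p ≠ q)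
    (hU : G.proxSet v = {p, q}) (h : G.EdgeInv n p q (c + d) d) :
    G.EdgeInv (n + 1) p v c d := by
  have hp : p < v := lt_of_mem_proxSet (by simp [hU])
  have hE : ∀ ν, ν < v → G.edgeVal p v c d ν = G.edgeVal p q (c + d) d ν := fun ν hν => by
    rw [edgeVal, edgeVal, val_eq_of_proxSet_eq_pair hpq hU hν]
    ring
  have hEv : G.edgeVal p v c d v =
      G.edgeVal p q (c + d) d p + G.edgeVal p q (c + d) d q + d := by
    rw [edgeVal, edgeVal, edgeVal, val_comm p v, val_eq_of_proxSet_eq_pair hpq hU hp,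
      val_self_of_proxSet_eq_pair hpq hU, val_comm q p]
    ring
  have hle : G.edgeMonoid n p q (c + d) d ≤ G.edgeMonoid (n + 1) p v c d :=
    AddSubmonoid.closure_image_le_closure_image fun σ hσ =>
      ⟨σ, isEndAt_succ_of_pair hv hpq hU hσ, hE σ (Fin.lt_def.2 (hv ▸ hσ.1))⟩
  have hpn : (p : ℕ) < n := hv ▸ hp
  have hqn : (q : ℕ) < n := hv ▸ lt_of_mem_proxSet (by simp [hU] : q ∈ G.proxSet v)
  refine ⟨fun ν hν => ?_, ?_, ?_, fun m hm => hle (h.conductor m ?_)⟩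
  · rcases Nat.lt_or_ge ν n with hν' | hν'
    · rw [hE ν (Fin.lt_def.2 (by omega))]
      exact hle (h.mem ν hν')
    · rw [show ν = v from Fin.ext (by omega), hEv]
      convert hle (add_mem (h.mem q hqn) h.add_left) using 1
      ring
  · rw [hE p hp]
    exact hle h.add_left
  · rw [hEv]
    convert hle (add_mem (h.mem p hpn) h.add_right) using 1
    ring
  · rw [hE p hp, hEv] at hm
    linarith


theorem edgeInv_succ_of_prox {x : Fin G.N} {c d : ℕ} (hv : (v : ℕ) = n) (IH : G.Invariant n)
    (hx : G.prox v x) (hcd : c.Coprime d) (hd : 0 < d) : G.EdgeInv (n + 1) x v c d := by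
  have hxn : (x : ℕ) < n := hv ▸ G.prox_lt hx
  rcases proxSet_eq_of_prox hx with hU | ⟨q, hqx, hU⟩
  · have hscale : ∀ s ∈ G.rowMonoid n x, (c + d) * s ∈ G.edgeMonoid (n + 1) x v c d :=
      fun s => Nat.mul_mem_of_mem_closure fun _ ⟨σ, ⟨hσ, hσx⟩, hval⟩ =>
        AddSubmonoid.subset_closure ⟨σ, isEndAt_succ_of_singleton hv hU hσ hσx, by
          rw [← hval, edgeVal, val_eq_of_proxSet_eq_singleton hU
            (Fin.lt_def.2 (hv ▸ hσ.1))]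
          ring⟩
    exact edgeInv_succ_of_singleton hv hU hcd hd
      (fun ν hν => hscale _ ((IH.row x hxn).mem ν hν))
      fun s hs => hscale _ ((IH.row x hxn).conductor s hs)
  · have hq : G.prox v q := mem_proxSet.1 (by simp [hU])
    exact edgeInv_succ_of_pair hv hqx.symm hU (IH.edge x q (c + d) d
      (adjAt_of_prox hv hx hq hqx.symm) (Nat.coprime_add_self_left.2 hcd) (by omega) hd)

theorem Invariant.succ (hv : (v : ℕ) = n) (hn : 0 < n) (IH : G.Invariant n) :
    G.Invariant (n + 1) := by
  refine ⟨fun μ hμ => ?_, fun x y c d hxy hcd hc hd => ?_⟩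
  · rcases Nat.lt_or_ge μ n with hμ' | hμ'
    · exact (IH.row μ hμ').succ_of_lt hv hμ'
    obtain rfl : μ = v := Fin.ext (by omega)
    obtain ⟨x, hx⟩ := G.prox_nonempty μ (by omega)
    have hxn : (x : ℕ) < n := hv ▸ G.prox_lt hx
    rcases proxSet_eq_of_prox hx with hU | ⟨q, hqx, hU⟩
    · exact rowInv_succ_of_singleton hv hU (IH.row x hxn)
    · have hq : G.prox μ q := mem_proxSet.1 (by simp [hU])
      exact rowInv_succ_of_pair hv hqx.symm hU (IH.edge x q 1 1
        (adjAt_of_prox hv hx hq hqx.symm) (Nat.coprime_one_left 1) one_pos one_pos)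
  · rcases (adjAt_succ_iff hv).1 hxy with ⟨hold, -⟩ | ⟨rfl, hx⟩ | ⟨rfl, hy⟩
    · exact (IH.edge x y c d hold hcd hc hd).succ_of_lt hv hold.2.1 hold.2.2.1
    · exact edgeInv_succ_of_prox hv IH hx hcd hd
    · exact (edgeInv_succ_of_prox hv IH hy hcd.symm hc).symm

end Step

theorem proxSet_one (h : 2 ≤ G.N) : G.proxSet ⟨1, h⟩ = {G.root} := by
  have hroot : ∀ j, G.prox ⟨1, h⟩ j → j = G.root := fun j hj =>
    Fin.ext (by have : (j : ℕ) < 1 := G.prox_lt hj; simp [root]; omega)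
  obtain ⟨x, hx⟩ := G.prox_nonempty ⟨1, h⟩ Nat.one_pos
  obtain rfl := hroot x hx
  exact (proxSet_eq_of_prox hx).resolve_right fun ⟨q, hqx, hU⟩ =>
    hqx (hroot q (mem_proxSet.1 (by simp [hU])))

theorem val_root_root : G.val G.root G.root = 1 := by
  rw [val_self_eq, show G.proxSet G.root = ∅ from eq_empty_of_forall_notMem fun j hj =>
    absurd (lt_of_mem_proxSet hj : (j : ℕ) < 0) (Nat.not_lt_zero _)]
  rfl

theorem RowInv.of_one_mem {n : ℕ} {μ : Fin G.N} (h : 1 ∈ G.rowMonoid n μ) : G.RowInv n μ :=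
  have hall : ∀ m, m ∈ G.rowMonoid n μ := fun m => by
    simpa using AddSubmonoid.nsmul_mem _ h m
  ⟨fun _ _ => hall _, fun m _ => hall m⟩

theorem invariant_two (h : 2 ≤ G.N) : G.Invariant 2 := by
  set o : Fin G.N := ⟨1, h⟩
  have hU : G.proxSet o = {G.root} := proxSet_one h
  have hne : G.root ≠ o := by simp [o, root, Fin.ext_iff]
  have hval : G.val o G.root = 1 := by
    rw [val_eq_of_proxSet_eq_singleton hU (by simp [o, root, Fin.lt_def]), val_root_root]
  have hend : ∀ σ : Fin G.N, (σ : ℕ) < 2 → G.IsEndAt 2 σ := fun σ => isEndAt_of_le_two le_rfl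
  have hedge : ∀ c d, c.Coprime d → 0 < d → G.EdgeInv 2 G.root o c d := fun c d hcd hd => by
    have hgen : c + d ∈ G.edgeMonoid 2 G.root o c d := AddSubmonoid.subset_closure
      ⟨G.root, hend _ (by simp [root]), by simp [edgeVal, val_root_root, hval]⟩
    have hmul : ∀ s, (c + d) * s ∈ G.edgeMonoid 2 G.root o c d := fun s => by
      simpa [mul_comm] using AddSubmonoid.nsmul_mem _ hgen s
    exact edgeInv_succ_of_singleton rfl hU hcd hd (fun _ _ => hmul _) fun s _ => hmul s
  refine ⟨fun μ hμ => RowInv.of_one_mem ?_, fun x y c d hxy hcd hc hd => ?_⟩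
  · obtain rfl | rfl : μ = G.root ∨ μ = o := by simp only [o, root, Fin.ext_iff]; omega
    · exact AddSubmonoid.subset_closure ⟨o, ⟨hend o (by simp [o]), hne.symm⟩, by rw [val_comm, hval]⟩
    · exact AddSubmonoid.subset_closure ⟨G.root, ⟨hend _ (by simp [root]), hne⟩, hval⟩
  rcases (adjAt_succ_iff (v := o) (n := 1) rfl).1 hxy with ⟨hold, -⟩ | ⟨rfl, hx⟩ | ⟨rfl, hy⟩
  · exact absurd (Fin.ext (by have := hold.2.1; have := hold.2.2.1; omega)) hold.1
  · obtain rfl : x = G.root := by simpa [hU] using mem_proxSet.2 hx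
    exact hedge c d hcd hd
  · obtain rfl : y = G.root := by simpa [hU] using mem_proxSet.2 hy
    exact (hedge d c hcd.symm hc).symm

theorem invariant_of_le {n : ℕ} (h2 : 2 ≤ n) (hn : n ≤ G.N) : G.Invariant n := by
  induction n, h2 using Nat.le_induction with
  | base => exact invariant_two hn
  | succ n h2 ih => exact Invariant.succ (v := ⟨n, by omega⟩) rfl (by omega) (ih (by omega))

noncomputable def proxMatrix (G : DualGraph) : Matrix (Fin G.N) (Fin G.N) ℚ :=
  fun μ ν => if G.prox μ ν then 1 else 0

noncomputable def multMatrix (G : DualGraph) : Matrix (Fin G.N) (Fin G.N) ℚ :=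
  fun v k => (G.mult v k : ℚ)

theorem P_eq_one_sub_proxMatrix : G.P = 1 - G.proxMatrix := by
  ext μ ν
  by_cases h : μ = ν
  · subst h
    have : ¬G.prox μ μ := fun h => lt_irrefl _ (G.prox_lt h)
    simp [P, proxMatrix, this]
  · simp only [P, proxMatrix, h, Matrix.sub_apply, Matrix.one_apply_ne h, if_false]
    split_ifs <;> norm_num

theorem multMatrix_eq : G.multMatrix = 1 + G.proxMatrix * G.multMatrix := by
  ext v k
  simp only [multMatrix, Matrix.add_apply, Matrix.one_apply, Matrix.mul_apply, proxMatrix,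
    ite_mul, one_mul, zero_mul, ← sum_filter]
  rw [mult_eq]
  push_cast
  rfl

theorem P_mul_multMatrix : G.P * G.multMatrix = 1 := by
  rw [P_eq_one_sub_proxMatrix, Matrix.sub_mul, Matrix.one_mul]
  nth_rewrite 1 [multMatrix_eq]
  exact add_sub_cancel_right _ _

theorem V_eq_multMatrix_mul_transpose : G.V = G.multMatrix * G.multMatrixᵀ := by
  refine Matrix.inv_eq_right_inv ?_
  rw [Matrix.mul_assoc, ← Matrix.mul_assoc G.P, P_mul_multMatrix, Matrix.one_mul,
    ← Matrix.transpose_mul, mul_eq_one_comm.1 P_mul_multMatrix, Matrix.transpose_one]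

theorem Vnat_eq_val (μ ν : Fin G.N) : G.Vnat μ ν = G.val μ ν := by
  have : G.V μ ν = (G.val μ ν : ℚ) := by
    simp [V_eq_multMatrix_mul_transpose, Matrix.mul_apply, multMatrix, val]
  rw [Vnat, this, Rat.num_natCast, Int.toNat_natCast]

theorem PtP_apply_of_ne {μ ν : Fin G.N} (h : μ ≠ ν) :
    (G.Pᵀ * G.P) μ ν =
      ∑ k, G.proxMatrix k μ * G.proxMatrix k ν - G.proxMatrix μ ν - G.proxMatrix ν μ := by
  rw [P_eq_one_sub_proxMatrix, Matrix.transpose_sub, Matrix.transpose_one, Matrix.sub_mul,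
    Matrix.mul_sub, Matrix.mul_sub, Matrix.one_mul, Matrix.mul_one, Matrix.one_mul]
  simp [Matrix.one_apply_ne h, Matrix.mul_apply]
  ring

theorem adjAt_of_adj {μ ν : Fin G.N} (h : G.adj μ ν) : G.adjAt G.N μ ν := by
  obtain ⟨hne, hval⟩ := h
  rw [PtP_apply_of_ne hne] at hval
  have hterm : ∀ k, 0 ≤ G.proxMatrix k μ * G.proxMatrix k ν := fun k => by
    unfold proxMatrix; split_ifs <;> norm_num
  have hsum := sum_nonneg fun k (_ : k ∈ univ) => hterm k
  set S := ∑ k, G.proxMatrix k μ * G.proxMatrix k ν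
  have key : S = 0 ∧ (G.prox μ ν ∨ G.prox ν μ) := by
    by_cases h1 : G.prox μ ν <;> by_cases h2 : G.prox ν μ <;>
      simp only [proxMatrix, h1, h2, if_true, if_false] at hval
    · exact absurd (G.prox_lt h1) (not_lt.2 (G.prox_lt h2).le)
    · exact ⟨by linarith, .inl h1⟩
    · exact ⟨by linarith, .inr h2⟩
    · linarith
  refine ⟨hne, μ.isLt, ν.isLt, key.2, fun k _ hk => ?_⟩
  have := (sum_eq_zero_iff_of_nonneg fun k _ => hterm k).1 key.1 k (mem_univ k)
  simp [proxMatrix, hk] at this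

theorem valence_le_one_of_isEndAt {σ : Fin G.N} (h : G.IsEndAt G.N σ) : G.valence σ ≤ 1 :=
  card_le_one.2 fun a ha b hb =>
    h.2 a b (adjAt_of_adj (mem_filter.1 ha).2) (adjAt_of_adj (mem_filter.1 hb).2)

theorem val_mem_closure_ends (μ ν : Fin G.N) :
    G.val μ ν ∈ AddSubmonoid.closure (G.val μ '' {σ | G.IsEndAt G.N σ}) := by
  rcases Nat.lt_or_ge G.N 2 with h | h
  · exact AddSubmonoid.subset_closure ⟨ν, isEndAt_of_le_two h.le ν.isLt, rfl⟩
  · exact AddSubmonoid.closure_mono (Set.image_mono fun σ hσ => hσ.1)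
      (((invariant_of_le h le_rfl).row μ μ.isLt).mem ν ν.isLt)

end DualGraph

/-- The value semigroup `SV_μ` is generated by the Zariski exponents of `μ`,
i.e. the values `V_{μτ}` where `τ` is an end of `Γ`. -/
theorem stmt11 (G : DualGraph) (μ : Fin G.N) :
    AddSubmonoid.closure (Set.range (G.Vnat μ)) =
      AddSubmonoid.closure {n : ℕ | ∃ τ, G.valence τ ≤ 1 ∧ G.Vnat μ τ = n} := by
  refine le_antisymm (AddSubmonoid.closure_le.2 ?_) (AddSubmonoid.closure_mono ?_)
  · rintro _ ⟨ν, rfl⟩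
    rw [DualGraph.Vnat_eq_val]
    refine AddSubmonoid.closure_mono ?_ (G.val_mem_closure_ends μ ν)
    rintro _ ⟨σ, hσ, rfl⟩
    exact ⟨σ, DualGraph.valence_le_one_of_isEndAt hσ, DualGraph.Vnat_eq_val μ σ⟩
  · rintro _ ⟨τ, -, rfl⟩
    exact ⟨τ, rfl⟩
end

section
/- Let μ be a vertex of Γ. If ξ ∈ H_μ, then d_μ·ξ ∈ S^μ; in particular d_μ·ξ is a nonnegative integer. -/
open Matrix BigOperators

open scoped Classical

/-!
Write `e := f + k + 1`, so that `d_μ ξ = e_μ`, and `m := V_{μμ}`. Since row `μ` of `V·PᵀP = 1` reads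
`Σ_{ν∼μ} V_{μν} = w_μ m - 1`, every vector satisfies
`e_μ = m (e PᵀP)_μ + Σ_{ν∼μ} S_ν` with `S_ν := m e_ν - V_{μν} e_μ`.
Each `S_ν` is divisible by `s^μ_ν`, and `m = s^μ_μ`. Minimality of `λ(f_μ, μ)` together with
`V_{μν} V_{iμ} ≤ V_{μμ} V_{iν}` (a maximum principle for the M-matrix `PᵀP`) gives `S_ν ≥ 0`.
The coefficient `(e PᵀP)_μ` may be negative, but not below minus the number of free points proximate
to `μ`. Each of them starts a chain of satellites proximate to `μ` that ends at its own neighbour `ν`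
of `μ`, and along the chain the proximity inequalities force `S_ν ≥ m`: dividing the `S_ν` by `m`
with remainder then exhibits `e_μ` as an element of `S^μ`.
-/

open Finset

/-- Pair with the negative part: `⟪x⁻, M x⟫ ≥ 0` by hypothesis and `⟪x⁻, M x⁺⟫ ≤ 0` because `M`
is nonpositive off the diagonal, so `‖A x⁻‖² = ⟪x⁻, M x⁻⟫ ≤ 0`. -/
theorem Matrix.nonneg_of_transpose_mul_self_mulVec_nonneg {ι R : Type*} [Fintype ι]
    [CommRing R] [LinearOrder R] [IsStrictOrderedRing R] {A : Matrix ι ι R}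
    (hA : Function.Injective A.mulVec) (hoff : ∀ i j, i ≠ j → (Aᵀ * A) i j ≤ 0)
    {x : ι → R} {μ : ι} (hxμ : x μ = 0) (hx : ∀ t, t ≠ μ → 0 ≤ ((Aᵀ * A) *ᵥ x) t) :
    0 ≤ x := by
  set M := Aᵀ * A
  have hpn : x⁺ * x⁻ = 0 := by
    ext t
    rcases le_total (x t) 0 with h | h <;> simp [h]
  have hxMx : 0 ≤ x⁻ ⬝ᵥ (M *ᵥ x) := Finset.sum_nonneg fun t _ => by
    rcases eq_or_ne t μ with rfl | ht
    · simp [hxμ]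
    · exact mul_nonneg (negPart_nonneg _) (hx t ht)
  have hxMp : x⁻ ⬝ᵥ (M *ᵥ x⁺) ≤ 0 := by
    simp only [dotProduct, mulVec, Finset.mul_sum]
    refine Finset.sum_nonpos fun t _ => Finset.sum_nonpos fun s _ => ?_
    rcases eq_or_ne t s with rfl | hts
    · have := congrFun hpn t
      simp only [Pi.mul_apply, Pi.zero_apply] at this
      rw [mul_left_comm, mul_comm (x⁻ t), this, mul_zero]
    · rw [mul_left_comm]
      exact mul_nonpos_of_nonpos_of_nonneg (hoff t s hts)
        (mul_nonneg (negPart_nonneg _ ) (posPart_nonneg _))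
  have hquad : x⁻ ⬝ᵥ (M *ᵥ x⁻) = A *ᵥ x⁻ ⬝ᵥ A *ᵥ x⁻ := by
    rw [← mulVec_mulVec, dotProduct_mulVec, vecMul_transpose]
  have hneg : x⁻ = 0 := by
    refine hA ?_
    rw [mulVec_zero]
    apply dotProduct_self_eq_zero.mp
    refine le_antisymm ?_ (Finset.sum_nonneg fun t _ => mul_self_nonneg _)
    rw [← hquad]
    calc x⁻ ⬝ᵥ (M *ᵥ x⁻) = x⁻ ⬝ᵥ (M *ᵥ x⁺) - x⁻ ⬝ᵥ (M *ᵥ x) := by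
          rw [← dotProduct_sub, ← mulVec_sub, show x⁺ - x = x⁻ by
            linear_combination posPart_sub_negPart x]
      _ ≤ 0 := by linarith
  rw [← posPart_sub_negPart x, hneg, sub_zero]
  exact posPart_nonneg x

namespace DualGraph

variable (G : DualGraph)

noncomputable section

def proxTargets (i : Fin G.N) : Finset (Fin G.N) := {t | G.prox i t}

def proxSources (μ : Fin G.N) : Finset (Fin G.N) := {j | G.prox j μ}

def freeProx (μ : Fin G.N) : Finset (Fin G.N) := {j | G.proxTargets j = {μ}}

end

variable {G}

@[simp] lemma mem_proxTargets {i t : Fin G.N} : t ∈ G.proxTargets i ↔ G.prox i t := by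
  simp [proxTargets]

@[simp] lemma mem_proxSources {μ j : Fin G.N} : j ∈ G.proxSources μ ↔ G.prox j μ := by
  simp [proxSources]

@[simp] lemma mem_freeProx {μ j : Fin G.N} : j ∈ G.freeProx μ ↔ G.proxTargets j = {μ} := by
  simp [freeProx]

@[simp] lemma mem_nbrs {μ ν : Fin G.N} : ν ∈ G.nbrs μ ↔ G.adj μ ν := by
  simp [nbrs]

lemma prox_irrefl (i : Fin G.N) : ¬ G.prox i i := fun h => lt_irrefl i (G.prox_lt h)

lemma prox_asymm {i j : Fin G.N} (h : G.prox i j) : ¬ G.prox j i :=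
  fun h' => lt_asymm (G.prox_lt h) (G.prox_lt h')

lemma card_proxTargets_le_two (i : Fin G.N) : #(G.proxTargets i) ≤ 2 := by
  simpa [← Set.ncard_coe_finset, proxTargets] using G.prox_card i

/-! ### The proximity matrix and its inverse -/

lemma P_apply (i t : Fin G.N) :
    G.P i t = (if i = t then 1 else 0) - (if G.prox i t then 1 else 0) := by
  by_cases h : i = t
  · subst h; simp [P, prox_irrefl]
  · simp only [P, h, if_false]; split_ifs <;> norm_num

lemma P_mulVec_apply (x : Fin G.N → ℚ) (i : Fin G.N) :
    (G.P *ᵥ x) i = x i - ∑ t ∈ G.proxTargets i, x t := by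
  simp [mulVec, dotProduct, P_apply, sub_mul, Finset.sum_sub_distrib, ite_mul,
    Finset.sum_ite, proxTargets]

lemma vecMul_P_apply (x : Fin G.N → ℚ) (μ : Fin G.N) :
    (x ᵥ* G.P) μ = x μ - ∑ j ∈ G.proxSources μ, x j := by
  simp [vecMul, dotProduct, P_apply, mul_sub, Finset.sum_sub_distrib, mul_ite,
    Finset.sum_ite, proxSources]

lemma P_isLowerTriangular : G.P.IsLowerTriangular := fun i t h => by
  have : i < t := h
  have hprox : ¬ G.prox i t := fun h' => lt_asymm this (G.prox_lt h')
  simp [P, this.ne, hprox]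

lemma P_mul_Q : G.P * G.Q = 1 := by
  refine mul_nonsing_inv _ ?_
  simp [det_of_isLowerTriangular _ P_isLowerTriangular, P]

lemma Q_mul_P : G.Q * G.P = 1 := mul_eq_one_comm.mp P_mul_Q

lemma Q_eq_add_sum (i j : Fin G.N) :
    G.Q i j = (if i = j then 1 else 0) + ∑ t ∈ G.proxTargets i, G.Q t j := by
  have h : (G.P *ᵥ fun t => G.Q t j) i = (1 : Matrix (Fin G.N) (Fin G.N) ℚ) i j := by
    rw [← P_mul_Q]; rfl
  rw [P_mulVec_apply, one_apply] at h
  rw [← h]; ring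

lemma Q_eq_zero_of_lt {i j : Fin G.N} (h : i < j) : G.Q i j = 0 := by
  induction i using WellFoundedLT.induction with
  | ind i ih =>
    rw [Q_eq_add_sum, if_neg h.ne, zero_add]
    refine Finset.sum_eq_zero fun t ht => ?_
    have hti := G.prox_lt (mem_proxTargets.mp ht)
    exact ih t hti (hti.trans h)

lemma Q_self (i : Fin G.N) : G.Q i i = 1 := by
  rw [Q_eq_add_sum, if_pos rfl, add_eq_left]
  exact Finset.sum_eq_zero fun t ht => Q_eq_zero_of_lt (G.prox_lt (mem_proxTargets.mp ht))

lemma Q_mem_natCast_mrange (i j : Fin G.N) :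
    G.Q i j ∈ AddMonoidHom.mrange (Nat.castAddMonoidHom ℚ) := by
  induction i using WellFoundedLT.induction with
  | ind i ih =>
    rw [Q_eq_add_sum]
    refine add_mem ?_ (sum_mem fun t ht => ih t (G.prox_lt (mem_proxTargets.mp ht)))
    split_ifs
    exacts [⟨1, Nat.cast_one⟩, zero_mem _]

lemma Q_nonneg (i j : Fin G.N) : 0 ≤ G.Q i j := by
  obtain ⟨n, hn⟩ := Q_mem_natCast_mrange i j
  rw [← hn]
  exact n.cast_nonneg

lemma one_le_Q_root (i : Fin G.N) : 1 ≤ G.Q i G.root := by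
  induction i using WellFoundedLT.induction with
  | ind i ih =>
    rcases Nat.eq_zero_or_pos i with hi | hi
    · rw [show i = G.root from Fin.ext hi, Q_self]
    · obtain ⟨s, hs⟩ := G.prox_nonempty i hi
      rw [Q_eq_add_sum]
      calc 1 ≤ G.Q s G.root := ih s (G.prox_lt hs)
        _ ≤ ∑ t ∈ G.proxTargets i, G.Q t G.root :=
          single_le_sum (fun t _ => Q_nonneg t _) (mem_proxTargets.mpr hs)
        _ ≤ _ := le_add_of_nonneg_left (by split_ifs <;> norm_num)

lemma M_mul_Q_mul_transpose : (G.Pᵀ * G.P) * (G.Q * G.Qᵀ) = 1 := by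
  rw [mul_assoc, ← mul_assoc G.P, P_mul_Q, one_mul, ← transpose_mul, Q_mul_P, transpose_one]

lemma V_eq_Q_mul_transpose : G.V = G.Q * G.Qᵀ := inv_eq_right_inv M_mul_Q_mul_transpose

lemma M_mul_V : (G.Pᵀ * G.P) * G.V = 1 := by
  rw [V_eq_Q_mul_transpose, M_mul_Q_mul_transpose]

lemma V_mul_M : G.V * (G.Pᵀ * G.P) = 1 := mul_eq_one_comm.mp M_mul_V

lemma V_comm (i j : Fin G.N) : G.V i j = G.V j i := by
  simp [V_eq_Q_mul_transpose, mul_apply, mul_comm]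

lemma V_mul_transpose_P : G.V * G.Pᵀ = G.Q := by
  rw [V_eq_Q_mul_transpose, mul_assoc, ← transpose_mul, P_mul_Q, transpose_one, mul_one]

lemma V_eq_Vnat (i j : Fin G.N) : G.V i j = G.Vnat i j := by
  have : G.V i j ∈ AddMonoidHom.mrange (Nat.castAddMonoidHom ℚ) := by
    rw [V_eq_Q_mul_transpose, mul_apply]
    exact sum_mem fun s _ => by
      obtain ⟨a, ha⟩ := Q_mem_natCast_mrange i s
      obtain ⟨b, hb⟩ := Q_mem_natCast_mrange j s
      exact ⟨a * b, by simp [← ha, ← hb]⟩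
  obtain ⟨n, hn⟩ := this
  simp [Vnat, ← hn]

lemma V_pos (i j : Fin G.N) : 0 < G.V i j := by
  rw [V_eq_Q_mul_transpose, mul_apply]
  calc (0 : ℚ) < G.Q i G.root * G.Q j G.root :=
        mul_pos (one_pos.trans_le (one_le_Q_root i)) (one_pos.trans_le (one_le_Q_root j))
    _ ≤ _ := single_le_sum (f := fun s => G.Q i s * G.Q j s) (fun s _ => mul_nonneg
        (Q_nonneg _ _) (Q_nonneg _ _)) (mem_univ _)

lemma kvec_mem_natCast_mrange (i : Fin G.N) :
    G.kvec i ∈ AddMonoidHom.mrange (Nat.castAddMonoidHom ℚ) :=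
  sum_mem fun j _ => Q_mem_natCast_mrange i j

lemma kvec_nonneg (i : Fin G.N) : 0 ≤ G.kvec i :=
  sum_nonneg fun j _ => Q_nonneg i j

lemma P_mulVec_kvec : G.P *ᵥ G.kvec = 1 := by
  have : G.kvec = G.Q *ᵥ 1 := by ext i; simp [kvec, mulVec, dotProduct]
  rw [this, mulVec_mulVec, P_mul_Q, one_mulVec]

/-! ### The intersection matrix `PᵀP` -/

lemma M_apply_of_ne {i j : Fin G.N} (hij : i ≠ j) :
    (G.Pᵀ * G.P) i j = #{t | G.prox t i ∧ G.prox t j}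
      - (if G.prox i j then 1 else 0) - (if G.prox j i then 1 else 0) := by
  simp only [mul_apply, transpose_apply, P_apply, mul_sub, mul_ite, mul_one, mul_zero,
    Finset.sum_sub_distrib]
  simp only [eq_comm, sum_ite_eq, mem_univ, ↓reduceIte, hij, zero_sub, sum_ite, sum_sub_distrib,
    mem_filter, true_and, filter_filter, and_comm, sum_const_zero, add_zero, sum_const,
    nsmul_eq_mul, mul_one]
  ring

lemma card_common_proxSources_le_one {i j : Fin G.N} (hij : i ≠ j) :
    #{t | G.prox t i ∧ G.prox t j} ≤ 1 := by
  refine Finset.card_le_one.mpr fun a ha b hb => ?_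
  simp only [Finset.mem_filter, mem_univ, true_and] at ha hb
  by_contra hab
  rcases lt_or_gt_of_ne hab with h | h
  · exact (G.prox_pair hb.1 hb.2 hij).2 a h ha
  · exact (G.prox_pair ha.1 ha.2 hij).2 b h hb

lemma M_eq_zero_or_neg_one {i j : Fin G.N} (hij : i ≠ j) :
    (G.Pᵀ * G.P) i j = 0 ∨ (G.Pᵀ * G.P) i j = -1 := by
  rw [M_apply_of_ne hij]
  rcases Nat.le_one_iff_eq_zero_or_eq_one.mp (card_common_proxSources_le_one hij) with h | h
  · by_cases hp : G.prox i j
    · simp [h, hp, prox_asymm hp]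
    · by_cases hp' : G.prox j i <;> simp [h, hp, hp']
  · obtain ⟨t, ht⟩ := card_pos.mp (h ▸ one_pos)
    simp only [Finset.mem_filter, mem_univ, true_and] at ht
    rcases (G.prox_pair ht.1 ht.2 hij).1 with hp | hp <;> simp [h, hp, prox_asymm hp]

lemma M_nonpos_of_ne {i j : Fin G.N} (hij : i ≠ j) : (G.Pᵀ * G.P) i j ≤ 0 := by
  rcases M_eq_zero_or_neg_one hij with h | h <;> norm_num [h]

lemma M_eq_zero_of_not_adj {i j : Fin G.N} (hij : i ≠ j) (h : ¬ G.adj i j) :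
    (G.Pᵀ * G.P) i j = 0 :=
  (M_eq_zero_or_neg_one hij).resolve_right fun h' => h ⟨hij, h'⟩

lemma exists_prox_prox_of_not_adj {μ t : Fin G.N} (ht : G.prox t μ) (h : ¬ G.adj μ t) :
    ∃ w, G.prox w μ ∧ G.prox w t := by
  have hμt : μ ≠ t := (G.prox_lt ht).ne
  have h0 := M_eq_zero_of_not_adj hμt h
  rw [M_apply_of_ne hμt, if_neg (prox_asymm ht), if_pos ht] at h0
  have hcard : #{w | G.prox w μ ∧ G.prox w t} = 1 := by
    have : (#{w | G.prox w μ ∧ G.prox w t} : ℚ) = 1 := by linarith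
    exact_mod_cast this
  obtain ⟨w, hw⟩ := card_pos.mp (hcard ▸ one_pos)
  exact ⟨w, by simpa using hw⟩

lemma M_comm (i j : Fin G.N) : (G.Pᵀ * G.P) i j = (G.Pᵀ * G.P) j i := by
  rw [← transpose_apply (G.Pᵀ * G.P), transpose_mul, transpose_transpose]

lemma vecMul_M_apply (x : Fin G.N → ℚ) (μ : Fin G.N) :
    (x ᵥ* (G.Pᵀ * G.P)) μ = G.w μ * x μ - ∑ ν ∈ G.nbrs μ, x ν := by
  have h : ∀ t, x t * (G.Pᵀ * G.P) t μ =
      (if t = μ then G.w μ * x μ else 0) - (if t ∈ G.nbrs μ then x t else 0) := by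
    intro t
    rcases eq_or_ne t μ with rfl | ht
    · have : ¬ G.adj t t := fun h => h.1 rfl
      simp [w, mul_comm, this]
    · rw [M_comm]
      simp only [mem_nbrs]
      by_cases hadj : G.adj μ t
      · simp [ht, hadj, hadj.2]
      · simp [ht, hadj, M_eq_zero_of_not_adj ht.symm hadj]
  simp [vecMul, dotProduct, h, Finset.sum_sub_distrib, ← Finset.sum_filter, nbrs]

lemma w_eq (μ : Fin G.N) : G.w μ = 1 + #(G.proxSources μ) := by
  simp [w, mul_apply, P_apply, mul_sub, Finset.sum_sub_distrib, mul_ite, Finset.sum_ite,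
    proxSources, prox_irrefl, Finset.filter_filter]

lemma P_mulVec_injective : Function.Injective G.P.mulVec :=
  Function.LeftInverse.injective (g := G.Q.mulVec) fun y => by
    rw [mulVec_mulVec, Q_mul_P, one_mulVec]

lemma M_mulVec_V_col (j s : Fin G.N) :
    ((G.Pᵀ * G.P) *ᵥ fun t => G.V t j) s = if s = j then 1 else 0 := by
  rw [← one_apply, ← M_mul_V]
  rfl

lemma V_mul_V_le (μ ν t : Fin G.N) : G.V μ ν * G.V t μ ≤ G.V μ μ * G.V t ν := by
  have hx := nonneg_of_transpose_mul_self_mulVec_nonneg P_mulVec_injective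
    (fun _ _ => M_nonpos_of_ne) (μ := μ)
    (x := G.V μ μ • (fun t => G.V t ν) - G.V μ ν • (fun t => G.V t μ))
    (by simp [V_comm μ ν, mul_comm]) fun s hs => by
      simp only [mulVec_sub, mulVec_smul, Pi.sub_apply, Pi.smul_apply, smul_eq_mul,
        M_mulVec_V_col, if_neg hs, mul_zero, sub_zero]
      exact mul_nonneg (V_pos μ μ).le (by split_ifs <;> norm_num)
  simpa [sub_nonneg, mul_comm] using hx t

lemma eq_V_mul_vecMul_M_add_sum (x : Fin G.N → ℚ) (μ : Fin G.N) :
    x μ = G.V μ μ * (x ᵥ* (G.Pᵀ * G.P)) μ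
      + ∑ ν ∈ G.nbrs μ, (G.V μ μ * x ν - G.V μ ν * x μ) := by
  have hrow : 1 = G.w μ * G.V μ μ - ∑ ν ∈ G.nbrs μ, G.V μ ν := by
    rw [← vecMul_M_apply, ← one_apply_eq μ, ← V_mul_M]
    rfl
  rw [vecMul_M_apply, Finset.sum_sub_distrib, ← Finset.mul_sum, ← Finset.sum_mul]
  linear_combination x μ * hrow

/-! ### Antinef divisors and the canonical divisor -/

lemma vecMul_M_vecMul_V (f : Fin G.N → ℚ) : (f ᵥ* (G.Pᵀ * G.P)) ᵥ* G.V = f := by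
  rw [vecMul_vecMul, M_mul_V, vecMul_one]

lemma Antinef.nonneg {f : Fin G.N → ℚ} (hf : G.Antinef f) (t : Fin G.N) : 0 ≤ f t := by
  rw [← vecMul_M_vecMul_V f]
  exact sum_nonneg fun i _ => mul_nonneg (hf i) (V_pos i t).le

lemma Antinef.P_mulVec_nonneg {f : Fin G.N → ℚ} (hf : G.Antinef f) (w : Fin G.N) :
    0 ≤ (G.P *ᵥ f) w := by
  rw [← vecMul_M_vecMul_V f, ← vecMul_transpose, vecMul_vecMul, V_mul_transpose_P]
  exact sum_nonneg fun i _ => mul_nonneg (hf i) (Q_nonneg i w)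

lemma P_mulVec_kvec_add_one (w : Fin G.N) :
    (G.P *ᵥ (G.kvec + 1)) w = 2 - #(G.proxTargets w) := by
  rw [mulVec_add, P_mulVec_kvec, Pi.add_apply, P_mulVec_apply]
  simp only [Pi.one_apply, sum_const, nsmul_eq_mul, mul_one]
  ring

lemma Antinef.two_sub_card_le_P_mulVec {f : Fin G.N → ℚ} (hf : G.Antinef f) (w : Fin G.N) :
    2 - #(G.proxTargets w) ≤ (G.P *ᵥ (f + G.kvec + 1)) w := by
  rw [add_assoc, mulVec_add, Pi.add_apply, P_mulVec_kvec_add_one]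
  linarith [hf.P_mulVec_nonneg w]

lemma sum_proxSources_two_sub_card (μ : Fin G.N) :
    ∑ j ∈ G.proxSources μ, (2 - #(G.proxTargets j) : ℚ) = #(G.freeProx μ) := by
  have h : ∀ j ∈ G.proxSources μ,
      (2 - #(G.proxTargets j) : ℚ) = if G.proxTargets j = {μ} then 1 else 0 := by
    intro j hj
    have hμ : μ ∈ G.proxTargets j := mem_proxTargets.mpr (mem_proxSources.mp hj)
    split_ifs with hfree
    · rw [hfree, card_singleton]
      norm_num
    · have h2 : #(G.proxTargets j) = 2 := by
        refine le_antisymm (card_proxTargets_le_two j) (not_lt.mp fun h1 => hfree ?_)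
        exact eq_singleton_iff_unique_mem.mpr
          ⟨hμ, fun t ht => card_le_one.mp (Nat.lt_succ_iff.mp h1) t ht μ hμ⟩
      rw [h2]
      norm_num
  rw [sum_congr rfl h, sum_boole, Nat.cast_inj]
  congr 1
  ext j
  simp only [mem_filter, mem_proxSources, mem_freeProx, and_iff_right_iff_imp]
  intro hj
  exact mem_proxTargets.mp (hj ▸ mem_singleton_self μ)

lemma Antinef.neg_card_freeProx_le {f : Fin G.N → ℚ} (hf : G.Antinef f) (μ : Fin G.N) :
    -(#(G.freeProx μ) : ℚ) ≤ ((f + G.kvec + 1) ᵥ* (G.Pᵀ * G.P)) μ := by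
  have h : (G.kvec + 1) ᵥ* (G.Pᵀ * G.P) = (G.P *ᵥ (G.kvec + 1)) ᵥ* G.P := by
    rw [← vecMul_vecMul, vecMul_transpose]
  have hμ : (#(G.proxTargets μ) : ℚ) ≤ 2 := by exact_mod_cast card_proxTargets_le_two μ
  rw [add_assoc, add_vecMul, Pi.add_apply, h, vecMul_P_apply]
  simp only [P_mulVec_kvec_add_one, sum_proxSources_two_sub_card]
  linarith [hf μ]

/-! ### Chains of satellites -/

lemma V_eq_sum_proxTargets_add_Q (s w : Fin G.N) :
    G.V s w = ∑ t ∈ G.proxTargets w, G.V s t + G.Q s w := by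
  have h : (G.P *ᵥ fun t => G.V s t) w = G.Q s w := by
    rw [← vecMul_transpose, ← V_mul_transpose_P]
    rfl
  rw [P_mulVec_apply] at h
  linarith

lemma proxTargets_eq_pair {μ t w : Fin G.N} (hwμ : G.prox w μ) (hwt : G.prox w t)
    (hμt : μ ≠ t) : G.proxTargets w = {μ, t} := by
  refine (eq_of_subset_of_card_le (fun p hp => ?_) ?_).symm
  · rcases mem_insert.mp hp with rfl | hp
    · exact mem_proxTargets.mpr hwμ
    · exact mem_singleton.mp hp ▸ mem_proxTargets.mpr hwt
  · rw [card_pair hμt]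
    exact card_proxTargets_le_two w

variable (G) in
/-- For `t` proximate to `μ`: step back from `t` to the other point it is proximate to as long as
that point is proximate to `μ` too; the walk ends at the free point proximate to `μ` whose chain of
satellites contains `t`. -/
noncomputable def chainRoot (μ t : Fin G.N) : Fin G.N :=
  if h : ∃ p, G.prox t p ∧ p ≠ μ ∧ G.prox p μ then chainRoot μ h.choose else t
termination_by t.val
decreasing_by exact G.prox_lt h.choose_spec.1

lemma chainRoot_of_mem_freeProx {μ j : Fin G.N} (hj : j ∈ G.freeProx μ) :
    G.chainRoot μ j = j := by
  rw [chainRoot, dif_neg]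
  rintro ⟨p, hjp, hpμ, -⟩
  exact hpμ (mem_singleton.mp (mem_freeProx.mp hj ▸ mem_proxTargets.mpr hjp))

lemma chainRoot_of_prox_prox {μ t w : Fin G.N} (hwμ : G.prox w μ) (hwt : G.prox w t)
    (htμ : G.prox t μ) : G.chainRoot μ w = G.chainRoot μ t := by
  have hex : ∃ p, G.prox w p ∧ p ≠ μ ∧ G.prox p μ := ⟨t, hwt, (G.prox_lt htμ).ne', htμ⟩
  rw [chainRoot, dif_pos hex]
  obtain ⟨hwp, hpμ, -⟩ := hex.choose_spec
  have hp := proxTargets_eq_pair hwμ hwt (G.prox_lt htμ).ne ▸ mem_proxTargets.mpr hwp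
  rw [mem_insert, mem_singleton] at hp
  rw [hp.resolve_left hpμ]

/-- If `w` is proximate to `μ` and `t` then `V_{μw} = V_{μμ} + V_{μt}` and `e_w ≥ e_μ + e_t`, so the
invariant survives one step up the chain; the chain ends at a neighbour of `μ`. -/
lemma exists_adj_chainRoot_eq {e : Fin G.N → ℚ}
    (he : ∀ w, 2 - #(G.proxTargets w) ≤ (G.P *ᵥ e) w) {μ t : Fin G.N} (ht : G.prox t μ)
    {a : ℚ} (hVt : G.V μ t = a * G.V μ μ) (het : a * e μ + 1 ≤ e t) :
    ∃ ν, G.adj μ ν ∧ G.chainRoot μ ν = G.chainRoot μ t ∧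
      G.V μ μ + G.V μ ν * e μ ≤ G.V μ μ * e ν := by
  induction t using WellFoundedGT.induction generalizing a with
  | ind t ih =>
    by_cases hadj : G.adj μ t
    · refine ⟨t, hadj, rfl, ?_⟩
      rw [hVt]
      nlinarith [V_pos μ μ]
    · obtain ⟨w, hwμ, hwt⟩ := exists_prox_prox_of_not_adj ht hadj
      have hμt := (G.prox_lt ht).ne
      have hpair := proxTargets_eq_pair hwμ hwt hμt
      have hVw : G.V μ w = (a + 1) * G.V μ μ := by
        rw [V_eq_sum_proxTargets_add_Q, hpair, sum_pair hμt, Q_eq_zero_of_lt (G.prox_lt hwμ),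
          hVt]
        ring
      have hew : (a + 1) * e μ + 1 ≤ e w := by
        have h := he w
        rw [P_mulVec_apply, hpair, sum_pair hμt, card_pair hμt] at h
        push_cast at h
        linarith
      obtain ⟨ν, hν, hroot, hVν⟩ := ih w (G.prox_lt hwt) hwμ hVw hew
      exact ⟨ν, hν, hroot.trans (chainRoot_of_prox_prox hwμ hwt ht), hVν⟩

lemma card_freeProx_le {e : Fin G.N → ℚ} (he : ∀ w, 2 - #(G.proxTargets w) ≤ (G.P *ᵥ e) w)
    (μ : Fin G.N) :
    #(G.freeProx μ) ≤ #{ν ∈ G.nbrs μ | G.V μ μ + G.V μ ν * e μ ≤ G.V μ μ * e ν} := by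
  refine card_le_card_of_surjOn (G.chainRoot μ) fun j hj => ?_
  have hfree := mem_freeProx.mp hj
  have hjμ : G.prox j μ := mem_proxTargets.mp (hfree ▸ mem_singleton_self μ)
  have hVj : G.V μ j = 1 * G.V μ μ := by
    rw [V_eq_sum_proxTargets_add_Q, hfree, sum_singleton, Q_eq_zero_of_lt (G.prox_lt hjμ)]
    ring
  have hej : 1 * e μ + 1 ≤ e j := by
    have h := he j
    rw [P_mulVec_apply, hfree, sum_singleton, card_singleton] at h
    push_cast at h
    linarith
  obtain ⟨ν, hadj, hroot, hν⟩ := exists_adj_chainRoot_eq he hjμ hVj hej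
  exact ⟨ν, by simp [hadj, hν], hroot.trans (chainRoot_of_mem_freeProx hj)⟩

/-! ### The semigroup `S^μ` -/

lemma sgcd_self (μ : Fin G.N) : G.sgcd μ μ = G.Vnat μ μ := by
  have : G.branch μ μ = ∅ := filter_false_of_mem fun _ _ h => h.1 rfl
  simp [sgcd, this]

lemma sgcd_dvd_Vnat_self (μ ν : Fin G.N) : G.sgcd μ ν ∣ G.Vnat μ μ :=
  Finset.gcd_dvd (mem_insert_self μ _)

lemma mem_branch_of_adj {μ ν : Fin G.N} (h : G.adj μ ν) : ν ∈ G.branch μ ν := by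
  have hpos : 0 < G.graph.dist ν μ :=
    (SimpleGraph.Adj.reachable (G.adj_symm h)).pos_dist_of_ne h.1.symm
  rw [branch, mem_filter, pathSet, mem_filter]
  refine ⟨mem_univ _, h.1.symm, h.1.symm, fun ⟨_, hd⟩ => ?_⟩
  simp only [dist, SimpleGraph.dist_self] at hd
  omega

lemma sgcd_dvd_Vnat_of_adj {μ ν : Fin G.N} (h : G.adj μ ν) : G.sgcd μ ν ∣ G.Vnat μ ν :=
  Finset.gcd_dvd (mem_insert_of_mem (mem_branch_of_adj h))

lemma mem_Ssg_map_of_dvd {μ ν : Fin G.N} {z : ℤ} (hz : 0 ≤ z) (h : (G.sgcd μ ν : ℤ) ∣ z) :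
    z ∈ (G.Ssg μ).map (Nat.castAddMonoidHom ℤ) := by
  lift z to ℕ using hz
  refine AddSubmonoid.mem_map_of_mem _ ?_
  obtain ⟨c, rfl⟩ := Int.natCast_dvd_natCast.mp h
  rw [mul_comm, ← smul_eq_mul]
  exact AddSubmonoid.nsmul_mem _ (AddSubmonoid.subset_closure (Set.mem_range_self ν)) c

-- Divide each `S_ν` by `m = s^μ_μ` with remainder; the quotients make up for a negative `A`.
lemma mem_Ssg_map_of_eq_add_sum {μ : Fin G.N} {x A : ℤ} {S : Fin G.N → ℤ}
    (hx : x = G.Vnat μ μ * A + ∑ ν ∈ G.nbrs μ, S ν) (hS : ∀ ν ∈ G.nbrs μ, 0 ≤ S ν)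
    (hdvd : ∀ ν ∈ G.nbrs μ, (G.sgcd μ ν : ℤ) ∣ S ν)
    (hA : 0 ≤ A + #{ν ∈ G.nbrs μ | (G.Vnat μ μ : ℤ) ≤ S ν}) :
    x ∈ (G.Ssg μ).map (Nat.castAddMonoidHom ℤ) := by
  set m : ℤ := (G.Vnat μ μ : ℤ)
  have hm : 0 < m :=
    Int.natCast_pos.mpr (Nat.cast_pos.mp (V_eq_Vnat (G := G) μ μ ▸ V_pos μ μ))
  have hcount : (#{ν ∈ G.nbrs μ | m ≤ S ν} : ℤ) ≤ ∑ ν ∈ G.nbrs μ, S ν / m := by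
    rw [card_filter]
    push_cast
    refine sum_le_sum fun ν hν => ?_
    split_ifs with h
    · exact Int.le_ediv_of_mul_le hm (by simpa using h)
    · exact Int.ediv_nonneg (hS ν hν) hm.le
  have hx' : x = m * (A + ∑ ν ∈ G.nbrs μ, S ν / m) + ∑ ν ∈ G.nbrs μ, S ν % m := by
    rw [hx, mul_add, mul_sum, add_assoc, ← sum_add_distrib]
    simp only [Int.mul_ediv_add_emod]
  rw [hx']
  refine add_mem (mem_Ssg_map_of_dvd (ν := μ) (by nlinarith) ?_)
    (sum_mem fun ν hν => mem_Ssg_map_of_dvd (ν := ν) (Int.emod_nonneg _ hm.ne') ?_)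
  · rw [sgcd_self]
    exact dvd_mul_right _ _
  · rw [Int.emod_def]
    exact dvd_sub (hdvd ν hν)
      (dvd_mul_of_dvd_left (Int.natCast_dvd_natCast.mpr (sgcd_dvd_Vnat_self μ ν)) _)

lemma mem_Ssg_map_of_V_mul_le {μ : Fin G.N} (e : Fin G.N → ℤ)
    (hP : ∀ w, 2 - #(G.proxTargets w) ≤ (G.P *ᵥ fun t => (e t : ℚ)) w)
    (hM : -(#(G.freeProx μ) : ℚ) ≤ ((fun t => (e t : ℚ)) ᵥ* (G.Pᵀ * G.P)) μ)
    (hV : ∀ ν, G.V μ ν * e μ ≤ G.V μ μ * e ν) :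
    e μ ∈ (G.Ssg μ).map (Nat.castAddMonoidHom ℤ) := by
  set m : ℤ := (G.Vnat μ μ : ℤ)
  set S : Fin G.N → ℤ := fun ν => m * e ν - G.Vnat μ ν * e μ
  set A : ℤ := (1 + #(G.proxSources μ)) * e μ - ∑ ν ∈ G.nbrs μ, e ν
  have hS (ν : Fin G.N) : (S ν : ℚ) = G.V μ μ * e ν - G.V μ ν * e μ := by
    simp [S, m, V_eq_Vnat]
  have hA : (A : ℚ) = ((fun t => (e t : ℚ)) ᵥ* (G.Pᵀ * G.P)) μ := by
    simp [A, vecMul_M_apply, w_eq]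
  have hsum : e μ = m * A + ∑ ν ∈ G.nbrs μ, S ν := by
    have h := eq_V_mul_vecMul_M_add_sum (fun t => (e t : ℚ)) μ
    simp only [← hA, ← hS] at h
    rw [V_eq_Vnat] at h
    exact_mod_cast h
  have hcard : #(G.freeProx μ) ≤ #{ν ∈ G.nbrs μ | m ≤ S ν} := by
    refine (card_freeProx_le hP μ).trans_eq (congrArg _ (filter_congr fun ν _ => ?_))
    rw [← Int.cast_le (R := ℚ), hS, show (m : ℚ) = G.V μ μ by simp [m, V_eq_Vnat]]
    constructor <;> intro h <;> linarith
  refine mem_Ssg_map_of_eq_add_sum hsum (fun ν _ => ?_) (fun ν hν => ?_) ?_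
  · exact_mod_cast (show (0 : ℚ) ≤ S ν by rw [hS]; linarith [hV ν])
  · exact dvd_sub
      (dvd_mul_of_dvd_left (Int.natCast_dvd_natCast.mpr (sgcd_dvd_Vnat_self μ ν)) _)
      (dvd_mul_of_dvd_left
        (Int.natCast_dvd_natCast.mpr (sgcd_dvd_Vnat_of_adj (mem_nbrs.mp hν))) _)
  · have hA' : -(#(G.freeProx μ) : ℤ) ≤ A := by exact_mod_cast hA ▸ hM
    have hcard' : (#(G.freeProx μ) : ℤ) ≤ #{ν ∈ G.nbrs μ | m ≤ S ν} := by
      exact_mod_cast hcard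
    linarith

theorem exists_mem_Ssg_eq_of_antinef {μ : Fin G.N} {f : Fin G.N → ℤ}
    (hf : G.Antinef fun i => (f i : ℚ))
    (hV : ∀ ν, G.V μ ν * (f μ + G.kvec μ + 1) ≤ G.V μ μ * (f ν + G.kvec ν + 1)) :
    ∃ n ∈ G.Ssg μ, (n : ℚ) = f μ + G.kvec μ + 1 := by
  choose k hk using fun i => kvec_mem_natCast_mrange (G := G) i
  have he (t : Fin G.N) : ((f t + k t + 1 : ℤ) : ℚ) = f t + G.kvec t + 1 := by
    simp [← hk]
  have he' : (fun t => ((f t + k t + 1 : ℤ) : ℚ)) = (fun t => (f t : ℚ)) + G.kvec + 1 :=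
    funext he
  obtain ⟨n, hn, hne⟩ := AddSubmonoid.mem_map.mp (mem_Ssg_map_of_V_mul_le (μ := μ) _
    (he' ▸ hf.two_sub_card_le_P_mulVec) (he' ▸ hf.neg_card_freeProx_le μ)
    (fun ν => by rw [he, he]; exact hV ν))
  refine ⟨n, hn, ?_⟩
  rw [← he]
  exact_mod_cast hne

lemma dval_pos {dh : Fin G.N → ℕ} (hdh : dh ≠ 0) (ν : Fin G.N) : 0 < G.dval dh ν := by
  obtain ⟨i, hi⟩ := Function.ne_iff.mp hdh
  exact sum_pos' (fun j _ => mul_nonneg (Nat.cast_nonneg _) (V_pos j ν).le)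
    ⟨i, mem_univ i, mul_pos (Nat.cast_pos.mpr (Nat.pos_of_ne_zero hi)) (V_pos i ν)⟩

lemma V_mul_dval_le (dh : Fin G.N → ℕ) (μ ν : Fin G.N) :
    G.V μ ν * G.dval dh μ ≤ G.V μ μ * G.dval dh ν := by
  simp only [dval, vecMul, dotProduct, mul_sum]
  refine sum_le_sum fun i _ => ?_
  have := mul_le_mul_of_nonneg_left (V_mul_V_le μ ν i) (Nat.cast_nonneg (α := ℚ) (dh i))
  linarith

lemma V_mul_le_of_lamA_le {dh : Fin G.N → ℕ} (hdh : dh ≠ 0) {f : Fin G.N → ℤ}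
    (hf : G.Antinef fun i => (f i : ℚ)) {μ : Fin G.N}
    (hmin : ∀ ν, G.lamA dh (f μ) μ ≤ G.lamA dh (f ν) ν) (ν : Fin G.N) :
    G.V μ ν * (f μ + G.kvec μ + 1) ≤ G.V μ μ * (f ν + G.kvec ν + 1) := by
  have hd := dval_pos hdh
  have hmin' := (div_le_div_iff₀ (hd μ) (hd ν)).mp (hmin ν)
  have heμ : 0 ≤ (f μ : ℚ) + G.kvec μ + 1 := by linarith [hf.nonneg μ, kvec_nonneg (G := G) μ]
  refine le_of_mul_le_mul_right ?_ (hd μ)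
  nlinarith [mul_le_mul_of_nonneg_left (V_mul_dval_le dh μ ν) heμ,
    mul_le_mul_of_nonneg_left hmin' (V_pos μ μ).le]

end DualGraph

/-- If `ξ ∈ H_μ` then `d_μ·ξ ∈ S^μ`; in particular `d_μ·ξ` is a nonnegative
integer. -/
theorem stmt16 (G : DualGraph) (μ : Fin G.N) (dh : Fin G.N → ℕ) (hdh : dh ≠ 0) :
    ∀ ξ ∈ G.Hset dh μ, ∃ n ∈ G.Ssg μ, (n : ℚ) = G.dval dh μ * ξ := by
  rintro ξ ⟨f, hf, hmin, rfl⟩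
  obtain ⟨n, hn, hne⟩ :=
    DualGraph.exists_mem_Ssg_eq_of_antinef hf (DualGraph.V_mul_le_of_lamA_le hdh hf hmin)
  refine ⟨n, hn, ?_⟩
  rw [hne, DualGraph.lamA, mul_div_cancel₀ _ (DualGraph.dval_pos hdh μ).ne']
end
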